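/- arXiv:0902.2144 — 3 statements merged into one kernel-verified Lean document; each statement's English description precedes it below -/
import Mathlib

section
/- Let P be a shrub on a finite set I. If a and a' are two vertices of the same height, and there exists a vertex b together with a directed path from b down to a and a directed path from b down to a', then there exists a vertex b' with edges covering both a and a', i.e. b' covers a and b' covers a'. -/
/-- A shrub on a finite vertex type `V`: a graph together with a height function
satisfying the shrub axioms (edges between consecutive heights, every positive-height
vertex covers a vertex one lower, and the two forbidden induced patterns). -/
structure Shrub (V : Type*) [Fintype V] [DecidableEq V] where
  adj : V → V → Prop
  symm : ∀ a b, adj a b → adj b a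
  loopless : ∀ a, ¬ adj a a
  height : V → ℕ
  edge_height : ∀ a b, adj a b → height a = height b + 1 ∨ height b = height a + 1
  covers_below : ∀ a, 0 < height a → ∃ b, adj a b ∧ height b + 1 = height a
  patternA : ∀ a b c d e, a ≠ b → c ≠ d → c ≠ e → d ≠ e →
    height a = height c + 1 → height b = height c + 1 →
    height d = height c → height e = height c →
    adj a c → adj a d → adj b d → adj b e → ¬ adj a e → ¬ adj b c → False
  patternB : ∀ a b c d, b ≠ c →
    height a = height d + 2 → height b = height d + 1 → height c = height d + 1 →
    adj a b → adj a c → adj b d → ¬ adj c d → False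

variable {V : Type*} [Fintype V] [DecidableEq V]

/-- `P.Covers j i` means the vertex `j` covers `i` : they are joined by an edge and
`j` is one level higher than `i` (edges are oriented downward). -/
def Shrub.Covers (P : Shrub V) (j i : V) : Prop :=
  P.adj i j ∧ P.height i + 1 = P.height j

/-- The underlying simple graph of a shrub. -/
def Shrub.graph (P : Shrub V) : SimpleGraph V where
  Adj := P.adj
  symm := by constructor; intro a b h; exact P.symm a b h
  loopless := by constructor; intro a h; exact P.loopless a h

/-! Induct on the height of `b` above `a`. Let `c` and `c'` be the vertices just above `a` and
`a'` on the two paths. They have the same height and are both reachable from `b`, so by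
induction some `d` covers both. Then `d` covers `c` and `c'`, and `c` covers `a`, so the
forbidden pattern (b) forces `c'` to cover `a` as well; hence `c'` covers both `a` and `a'`. -/

namespace Shrub

variable (P : Shrub V)

lemma height_lt_of_transGen {b a : V} (h : Relation.TransGen P.Covers b a) :
    P.height a < P.height b := by
  induction h with
  | single h => exact Nat.lt_of_succ_le h.2.le
  | tail _ h ih => have := h.2; omega

lemma covers_of_transGen_of_height_eq {b a : V} (h : Relation.TransGen P.Covers b a)
    (hh : P.height b = P.height a + 1) : P.Covers b a := by
  cases h with
  | single h => exact h
  | tail hbc hca => have := P.height_lt_of_transGen hbc; have := hca.2; omega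

lemma exists_transGen_covers_of_height_lt {b a : V} (h : Relation.TransGen P.Covers b a)
    (hh : P.height a + 1 < P.height b) : ∃ c, Relation.TransGen P.Covers b c ∧ P.Covers c a := by
  cases h with
  | single h => have := h.2; omega
  | tail hbc hca => exact ⟨_, hbc, hca⟩

lemma covers_of_covers_of_covers {d c c' a : V} (hdc : P.Covers d c) (hdc' : P.Covers d c')
    (hca : P.Covers c a) : P.Covers c' a := by
  obtain ⟨hcd, hc⟩ := hdc
  obtain ⟨hc'd, hc'⟩ := hdc'
  obtain ⟨hac, ha⟩ := hca
  refine ⟨?_, by omega⟩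
  by_contra hac'
  have hcc' : c ≠ c' := by rintro rfl; exact hac' hac
  exact P.patternB d c c' a hcc' (by omega) (by omega) (by omega)
    (P.symm _ _ hcd) (P.symm _ _ hc'd) (P.symm _ _ hac) (hac' ∘ P.symm _ _)

lemma exists_covers_covers_of_transGen {b a a' : V} (hh : P.height a = P.height a')
    (h : Relation.TransGen P.Covers b a) (h' : Relation.TransGen P.Covers b a') :
    ∃ b', P.Covers b' a ∧ P.Covers b' a' := by
  obtain ⟨n, hn⟩ := Nat.exists_eq_add_of_lt (P.height_lt_of_transGen h)
  induction n generalizing a a' with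
  | zero =>
    exact ⟨b, P.covers_of_transGen_of_height_eq h (by omega),
      P.covers_of_transGen_of_height_eq h' (by omega)⟩
  | succ n ih =>
    obtain ⟨c, hbc, hca⟩ := P.exists_transGen_covers_of_height_lt h (by omega)
    obtain ⟨c', hbc', hc'a'⟩ := P.exists_transGen_covers_of_height_lt h' (by omega)
    have hc : P.height a + 1 = P.height c := hca.2
    have hc' : P.height a' + 1 = P.height c' := hc'a'.2
    obtain ⟨d, hdc, hdc'⟩ := ih (by omega) hbc hbc' (by omega)
    exact ⟨c', P.covers_of_covers_of_covers hdc hdc' hca, hc'a'⟩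

end Shrub

/-- if `a` and `a'` have the same height and some vertex `b` admits a
(nonempty) descending path of covering relations to `a` and one to `a'`, then some
vertex `b'` covers both `a` and `a'`. -/
theorem stmt0 (P : Shrub V) (a a' : V) (hh : P.height a = P.height a')
    (b : V) (h1 : Relation.TransGen (fun x y => P.Covers x y) b a)
    (h2 : Relation.TransGen (fun x y => P.Covers x y) b a') :
    ∃ b', P.Covers b' a ∧ P.Covers b' a' :=
  P.exists_covers_covers_of_transGen hh h1 h2
end

section
/- The partial compositions ∘_i on shrubs (substitution of a shrub P' at a vertex i of a shrub P, joining each neighbor of i in P to every height-0 vertex of P' and shifting heights of P' by h_P(i)) satisfy the operad axioms: the single-vertex shrub is a unit; for disjoint vertices i, j of P, (P ∘_i P') ∘_j P'' = (P ∘_j P'') ∘_i P'; and for i ∈ P and i' ∈ P', (P ∘_i P') ∘_{i'} P'' = P ∘_i (P' ∘_{i'} P''). -/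
/-- A shrub on a finite set `I ⊆ ℕ` of labels: a graph supported on `I` with a
height function satisfying the shrub axioms. -/
structure ShrubOn (I : Finset ℕ) where
  adj : ℕ → ℕ → Prop
  supp : ∀ a b, adj a b → a ∈ I ∧ b ∈ I
  symm : ∀ a b, adj a b → adj b a
  loopless : ∀ a, ¬ adj a a
  height : ℕ → ℕ
  edge_height : ∀ a b, adj a b → height a = height b + 1 ∨ height b = height a + 1
  covers_below : ∀ a ∈ I, 0 < height a → ∃ b, adj a b ∧ height b + 1 = height a
  patternA : ∀ a b c d e, a ≠ b → c ≠ d → c ≠ e → d ≠ e →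
    height a = height c + 1 → height b = height c + 1 →
    height d = height c → height e = height c →
    adj a c → adj a d → adj b d → adj b e → ¬ adj a e → ¬ adj b c → False
  patternB : ∀ a b c d, b ≠ c →
    height a = height d + 2 → height b = height d + 1 → height c = height d + 1 →
    adj a b → adj a c → adj b d → ¬ adj c d → False

/-- `Q` is the partial composition `P ∘ᵢ P'` : the disjoint union of `P` minus `i`
and `P'`, where every former `P`-neighbor of `i` is joined to every height-0 vertex
of `P'`, and the heights of `P'` are shifted by the height of `i` in `P`. -/
def IsComp {I J : Finset ℕ} (P : ShrubOn I) (i : ℕ) (P' : ShrubOn J)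
    {K : Finset ℕ} (Q : ShrubOn K) : Prop :=
  K = (I.erase i) ∪ J ∧
  (∀ a b, Q.adj a b ↔ ((P.adj a b ∧ a ≠ i ∧ b ≠ i) ∨ P'.adj a b ∨
    (P.adj a i ∧ b ∈ J ∧ P'.height b = 0) ∨ (P.adj b i ∧ a ∈ J ∧ P'.height a = 0))) ∧
  (∀ a ∈ I.erase i, Q.height a = P.height a) ∧
  (∀ b ∈ J, Q.height b = P'.height b + P.height i)

/-- Two shrubs (on a priori different label sets) are the same. -/
def ShrubOn.SameAs {K K' : Finset ℕ} (Q : ShrubOn K) (R : ShrubOn K') : Prop :=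
  K = K' ∧ (∀ a b, Q.adj a b ↔ R.adj a b) ∧ ∀ a ∈ K, Q.height a = R.height a

/-!
All three identities are checked componentwise. The vertex sets agree as finsets, and heights
agree by a case analysis on the factor a vertex comes from. For the edges, both sides unfold to
the same finite disjunction of edge types (edges inside one factor, and edges joining a neighbour
of a substituted vertex to a height-0 vertex of the shrub inserted there); matching them is
propositional once one knows that, by disjointness, a vertex of one factor is never the
substitution vertex of another.
-/

namespace ShrubOn

variable {I : Finset ℕ} (P : ShrubOn I) {a b : ℕ}

theorem mem_of_adj_left (h : P.adj a b) : a ∈ I := (P.supp a b h).1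

theorem mem_of_adj_right (h : P.adj a b) : b ∈ I := (P.supp a b h).2

theorem adj_comm : P.adj a b ↔ P.adj b a := ⟨P.symm a b, P.symm b a⟩

end ShrubOn

namespace IsComp

variable {I J K : Finset ℕ} {P : ShrubOn I} {i : ℕ} {P' : ShrubOn J} {Q : ShrubOn K}

theorem mem_iff (hQ : IsComp P i P' Q) {x : ℕ} : x ∈ K ↔ x ∈ I.erase i ∨ x ∈ J := by
  rw [hQ.1, Finset.mem_union]

theorem mem_of_mem_erase (hQ : IsComp P i P' Q) {x : ℕ} (hx : x ∈ I.erase i) : x ∈ K :=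
  hQ.mem_iff.mpr (Or.inl hx)

theorem mem_of_mem_right (hQ : IsComp P i P' Q) {x : ℕ} (hx : x ∈ J) : x ∈ K :=
  hQ.mem_iff.mpr (Or.inr hx)

theorem adj_iff (hQ : IsComp P i P' Q) (a b : ℕ) :
    Q.adj a b ↔ (P.adj a b ∧ a ≠ i ∧ b ≠ i) ∨ P'.adj a b ∨
      (P.adj a i ∧ b ∈ J ∧ P'.height b = 0) ∨ (P.adj b i ∧ a ∈ J ∧ P'.height a = 0) :=
  hQ.2.1 a b

theorem height_of_mem_erase (hQ : IsComp P i P' Q) {a : ℕ} (ha : a ∈ I.erase i) :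
    Q.height a = P.height a :=
  hQ.2.2.1 a ha

theorem height_of_mem_right (hQ : IsComp P i P' Q) {b : ℕ} (hb : b ∈ J) :
    Q.height b = P'.height b + P.height i :=
  hQ.2.2.2 b hb

theorem adj_iff_of_notMem_right (hQ : IsComp P i P' Q) {v : ℕ} (hvJ : v ∉ J) (hvi : v ≠ i)
    (a : ℕ) :
    Q.adj a v ↔ (P.adj a v ∧ a ≠ i) ∨ (P.adj v i ∧ a ∈ J ∧ P'.height a = 0) := by
  have : ¬ P'.adj a v := fun h => hvJ (P'.mem_of_adj_right h)
  rw [hQ.adj_iff]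
  tauto

theorem adj_iff_of_mem_right (hQ : IsComp P i P' Q) {v : ℕ} (hvI : v ∉ I) (hvJ : v ∈ J)
    (a : ℕ) :
    Q.adj a v ↔ P'.adj a v ∨ (P.adj a i ∧ P'.height v = 0) := by
  have : ¬ P.adj a v := fun h => hvI (P.mem_of_adj_right h)
  have : ¬ P.adj v i := fun h => hvI (P.mem_of_adj_left h)
  rw [hQ.adj_iff]
  tauto

theorem mem_and_height_eq_zero_iff (hQ : IsComp P i P' Q) (x : ℕ) :
    x ∈ K ∧ Q.height x = 0 ↔
      (x ∈ I.erase i ∧ P.height x = 0) ∨ (x ∈ J ∧ P'.height x = 0 ∧ P.height i = 0) := by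
  rw [hQ.mem_iff]
  constructor
  · rintro ⟨hx | hx, h0⟩
    · exact Or.inl ⟨hx, hQ.height_of_mem_erase hx ▸ h0⟩
    · have := hQ.height_of_mem_right hx
      exact Or.inr ⟨hx, by omega, by omega⟩
  · rintro (⟨hx, h0⟩ | ⟨hx, h0, hi0⟩)
    · exact ⟨Or.inl hx, hQ.height_of_mem_erase hx ▸ h0⟩
    · exact ⟨Or.inr hx, by rw [hQ.height_of_mem_right hx, h0, hi0]⟩

end IsComp

section Unit

variable {I K : Finset ℕ} {i : ℕ} {U : ShrubOn {i}} {P : ShrubOn I} {Q : ShrubOn K}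

theorem IsComp.sameAs_of_unit_right (hi : i ∈ I) (hU : ∀ a b, ¬ U.adj a b)
    (hU0 : U.height i = 0) (hQ : IsComp P i U Q) : Q.SameAs P := by
  refine ⟨Finset.ext fun x => ?_, fun a b => ?_, fun a ha => ?_⟩
  · rw [hQ.mem_iff, Finset.mem_erase, Finset.mem_singleton]
    rcases eq_or_ne x i with rfl | hx <;> tauto
  · rw [hQ.adj_iff]
    by_cases ha : a = i <;> by_cases hb : b = i <;> subst_vars <;>
      simp [*, P.loopless, P.adj_comm]
  · rcases hQ.mem_iff.mp ha with ha | ha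
    · exact hQ.height_of_mem_erase ha
    · rw [Finset.mem_singleton.mp ha, hQ.height_of_mem_right (Finset.mem_singleton_self i), hU0,
        zero_add]

theorem IsComp.sameAs_of_unit_left (hU : ∀ a b, ¬ U.adj a b) (hU0 : U.height i = 0)
    (hQ : IsComp U i P Q) : Q.SameAs P := by
  refine ⟨Finset.ext fun x => ?_, fun a b => ?_, fun a ha => ?_⟩
  · simp [hQ.mem_iff]
  · simp [hQ.adj_iff, hU]
  · replace ha : a ∈ I := by simpa [hQ.mem_iff] using ha
    rw [hQ.height_of_mem_right ha, hU0, add_zero]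

end Unit

section Parallel

variable {I J₁ J₂ K₁ K₂ L₁ L₂ : Finset ℕ} {P : ShrubOn I} {P₁ : ShrubOn J₁} {P₂ : ShrubOn J₂}
  {Q₁ : ShrubOn K₁} {Q₂ : ShrubOn K₂} {R₁ : ShrubOn L₁} {R₂ : ShrubOn L₂} {i j : ℕ}

theorem IsComp.sameAs_of_parallel (hi : i ∈ I) (hj : j ∈ I) (hij : i ≠ j)
    (hIJ₁ : Disjoint I J₁) (hIJ₂ : Disjoint I J₂)
    (hQ₁ : IsComp P i P₁ Q₁) (hQ₂ : IsComp Q₁ j P₂ Q₂)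
    (hR₁ : IsComp P j P₂ R₁) (hR₂ : IsComp R₁ i P₁ R₂) : Q₂.SameAs R₂ := by
  have hiJ₁ : i ∉ J₁ := Finset.disjoint_left.mp hIJ₁ hi
  have hjJ₁ : j ∉ J₁ := Finset.disjoint_left.mp hIJ₁ hj
  have hiJ₂ : i ∉ J₂ := Finset.disjoint_left.mp hIJ₂ hi
  have hjJ₂ : j ∉ J₂ := Finset.disjoint_left.mp hIJ₂ hj
  refine ⟨Finset.ext fun x => ?_, fun a b => ?_, fun a ha => ?_⟩
  · simp only [hQ₂.mem_iff, hQ₁.mem_iff, hR₂.mem_iff, hR₁.mem_iff, Finset.mem_erase]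
    grind
  · rw [hQ₂.adj_iff, hQ₁.adj_iff_of_notMem_right hjJ₁ hij.symm,
      hQ₁.adj_iff_of_notMem_right hjJ₁ hij.symm, hQ₁.adj_iff, hR₂.adj_iff,
      hR₁.adj_iff_of_notMem_right hiJ₂ hij, hR₁.adj_iff_of_notMem_right hiJ₂ hij, hR₁.adj_iff]
    grind [P.adj_comm, P₁.mem_of_adj_left, P₁.mem_of_adj_right, P₂.mem_of_adj_left,
      P₂.mem_of_adj_right]
  · rcases hQ₂.mem_iff.mp ha with ha | ha
    · obtain ⟨haj, ha⟩ := Finset.mem_erase.mp ha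
      rw [hQ₂.height_of_mem_erase (Finset.mem_erase_of_ne_of_mem haj ha)]
      rcases hQ₁.mem_iff.mp ha with ha | ha
      · obtain ⟨hai, ha⟩ := Finset.mem_erase.mp ha
        have ha' : a ∈ I.erase j := Finset.mem_erase_of_ne_of_mem haj ha
        rw [hQ₁.height_of_mem_erase (Finset.mem_erase_of_ne_of_mem hai ha),
          hR₂.height_of_mem_erase (Finset.mem_erase_of_ne_of_mem hai (hR₁.mem_of_mem_erase ha')),
          hR₁.height_of_mem_erase ha']
      · rw [hQ₁.height_of_mem_right ha, hR₂.height_of_mem_right ha,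
          hR₁.height_of_mem_erase (Finset.mem_erase_of_ne_of_mem hij hi)]
    · have hai : a ≠ i := fun h => hiJ₂ (h ▸ ha)
      rw [hQ₂.height_of_mem_right ha,
        hQ₁.height_of_mem_erase (Finset.mem_erase_of_ne_of_mem hij.symm hj),
        hR₂.height_of_mem_erase (Finset.mem_erase_of_ne_of_mem hai (hR₁.mem_of_mem_right ha)),
        hR₁.height_of_mem_right ha]

end Parallel

section Sequential

variable {I J L K₁ K₂ M₁ M₂ : Finset ℕ} {P : ShrubOn I} {P' : ShrubOn J} {P'' : ShrubOn L}
  {Q₁ : ShrubOn K₁} {Q₂ : ShrubOn K₂} {R₁ : ShrubOn M₁} {R₂ : ShrubOn M₂} {i i' : ℕ}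

theorem IsComp.sameAs_of_sequential (hi : i ∈ I) (hi' : i' ∈ J)
    (hIJ : Disjoint I J) (hIL : Disjoint I L) (hJL : Disjoint J L)
    (hQ₁ : IsComp P i P' Q₁) (hQ₂ : IsComp Q₁ i' P'' Q₂)
    (hR₁ : IsComp P' i' P'' R₁) (hR₂ : IsComp P i R₁ R₂) : Q₂.SameAs R₂ := by
  have hi'I : i' ∉ I := Finset.disjoint_right.mp hIJ hi'
  have hiJ : i ∉ J := Finset.disjoint_left.mp hIJ hi
  have hiL : i ∉ L := Finset.disjoint_left.mp hIL hi
  have hi'L : i' ∉ L := Finset.disjoint_left.mp hJL hi'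
  refine ⟨Finset.ext fun x => ?_, fun a b => ?_, fun a ha => ?_⟩
  · simp only [hQ₂.mem_iff, hQ₁.mem_iff, hR₂.mem_iff, hR₁.mem_iff, Finset.mem_erase]
    grind
  · rw [hQ₂.adj_iff, hQ₁.adj_iff_of_mem_right hi'I hi', hQ₁.adj_iff_of_mem_right hi'I hi',
      hQ₁.adj_iff, hR₂.adj_iff, hR₁.mem_and_height_eq_zero_iff,
      hR₁.mem_and_height_eq_zero_iff, hR₁.adj_iff]
    grind (splits := 20) [P.mem_of_adj_left, P.mem_of_adj_right, P'.mem_of_adj_left,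
      P'.mem_of_adj_right, P''.mem_of_adj_left, P''.mem_of_adj_right]
  · rcases hQ₂.mem_iff.mp ha with ha | ha
    · obtain ⟨hai', ha⟩ := Finset.mem_erase.mp ha
      rw [hQ₂.height_of_mem_erase (Finset.mem_erase_of_ne_of_mem hai' ha)]
      rcases hQ₁.mem_iff.mp ha with ha | ha
      · rw [hQ₁.height_of_mem_erase ha, hR₂.height_of_mem_erase ha]
      · have ha' : a ∈ J.erase i' := Finset.mem_erase_of_ne_of_mem hai' ha
        rw [hQ₁.height_of_mem_right ha, hR₂.height_of_mem_right (hR₁.mem_of_mem_erase ha'),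
          hR₁.height_of_mem_erase ha']
    · rw [hQ₂.height_of_mem_right ha, hQ₁.height_of_mem_right hi',
        hR₂.height_of_mem_right (hR₁.mem_of_mem_right ha), hR₁.height_of_mem_right ha, add_assoc]

end Sequential

/-- the partial compositions of shrubs satisfy the operad axioms:
the one-vertex shrub is a (two-sided) unit, and the parallel and series
associativity axioms hold. -/
theorem stmt9 :
    (∀ (I : Finset ℕ) (P : ShrubOn I) (i : ℕ), i ∈ I →
      ∀ U : ShrubOn ({i} : Finset ℕ), (∀ a b, ¬ U.adj a b) → U.height i = 0 →
        (∀ (K : Finset ℕ) (Q : ShrubOn K), IsComp P i U Q → Q.SameAs P) ∧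
        (∀ (K : Finset ℕ) (Q : ShrubOn K), IsComp U i P Q → Q.SameAs P)) ∧
    (∀ (I J₁ J₂ : Finset ℕ) (P : ShrubOn I) (P₁ : ShrubOn J₁) (P₂ : ShrubOn J₂)
      (i j : ℕ), i ∈ I → j ∈ I → i ≠ j →
      Disjoint I J₁ → Disjoint I J₂ → Disjoint J₁ J₂ →
      ∀ (K₁ K₂ L₁ L₂ : Finset ℕ) (Q₁ : ShrubOn K₁) (Q₂ : ShrubOn K₂)
        (R₁ : ShrubOn L₁) (R₂ : ShrubOn L₂),
        IsComp P i P₁ Q₁ → IsComp Q₁ j P₂ Q₂ →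
        IsComp P j P₂ R₁ → IsComp R₁ i P₁ R₂ → Q₂.SameAs R₂) ∧
    (∀ (I J L : Finset ℕ) (P : ShrubOn I) (P' : ShrubOn J) (P'' : ShrubOn L)
      (i i' : ℕ), i ∈ I → i' ∈ J →
      Disjoint I J → Disjoint I L → Disjoint J L →
      ∀ (K₁ K₂ M₁ M₂ : Finset ℕ) (Q₁ : ShrubOn K₁) (Q₂ : ShrubOn K₂)
        (R₁ : ShrubOn M₁) (R₂ : ShrubOn M₂),
        IsComp P i P' Q₁ → IsComp Q₁ i' P'' Q₂ →
        IsComp P' i' P'' R₁ → IsComp P i R₁ R₂ → Q₂.SameAs R₂) := by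
  refine ⟨fun I P i hi U hU hU0 =>
    ⟨fun _ _ hQ => hQ.sameAs_of_unit_right hi hU hU0, fun _ _ hQ => hQ.sameAs_of_unit_left hU hU0⟩,
    ?_, ?_⟩
  · intro I J₁ J₂ P P₁ P₂ i j hi hj hij hIJ₁ hIJ₂ _ K₁ K₂ L₁ L₂ Q₁ Q₂ R₁ R₂
    exact IsComp.sameAs_of_parallel hi hj hij hIJ₁ hIJ₂
  · intro I J L P P' P'' i i' hi hi' hIJ hIL hJL K₁ K₂ M₁ M₂ Q₁ Q₂ R₁ R₂
    exact IsComp.sameAs_of_sequential hi hi' hIJ hIL hJL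
end

section
/- In the mould operad, where Mould(I) is the field of rational functions in variables (u_i)_{i∈I} and f ∘_i g = (∑_{j∈J} u_j) · g · f|_{u_i = ∑_{j∈J} u_j}, the composition is associative in both senses: (f ∘_i g) ∘_j h = (f ∘_j h) ∘_i g for distinct i, j in the index set of f, and (f ∘_i g) ∘_{i'} h = f ∘_i (g ∘_{i'} h) for i' in the index set of g. -/
open MvPolynomial in
/-- The ambient field of moulds: rational functions in the variables `u_j`, `j : ℕ`. -/
noncomputable abbrev M := FractionRing (MvPolynomial ℕ ℚ)

/-- The inclusion of polynomials into the field of rational functions. -/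
noncomputable def toM : MvPolynomial ℕ ℚ →+* M :=
  algebraMap (MvPolynomial ℕ ℚ) M

/-- Substitution of the polynomial `s` for the variable `u_i` in a polynomial. -/
noncomputable def psubst (i : ℕ) (s : MvPolynomial ℕ ℚ) :
    MvPolynomial ℕ ℚ →ₐ[ℚ] MvPolynomial ℕ ℚ :=
  MvPolynomial.aeval (fun j => if j = i then s else MvPolynomial.X j)

/-- The sum `∑_{j ∈ J} u_j`. -/
noncomputable def sumJ (J : Finset ℕ) : MvPolynomial ℕ ℚ :=
  ∑ j ∈ J, MvPolynomial.X j

/-- A rational function is supported on the variable set `I` if it is a quotient of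
polynomials whose variables lie in `I`. -/
def MSupported (f : M) (I : Finset ℕ) : Prop :=
  ∃ p q : MvPolynomial ℕ ℚ, q ≠ 0 ∧ p.vars ⊆ I ∧ q.vars ⊆ I ∧ f = toM p / toM q

/-- `MComp f i J g h` : `h` is the mould composition
`f ∘_i g = (∑_{j∈J} u_j) · g · f|_{u_i = ∑_{j∈J} u_j}`, where `g` is a mould in the
variables `J`, computed on a fraction presentation `f = p/q`. -/
def MComp (f : M) (i : ℕ) (J : Finset ℕ) (g h : M) : Prop :=
  ∃ p q : MvPolynomial ℕ ℚ, q ≠ 0 ∧ psubst i (sumJ J) q ≠ 0 ∧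
    f = toM p / toM q ∧
    h = toM (sumJ J) * g * (toM (psubst i (sumJ J) p) / toM (psubst i (sumJ J) q))

open MvPolynomial

/-!
Write `σ_i^J` for the substitution `u_i ↦ ∑_{j ∈ J} u_j`. The value of `f ∘_i g` computed on a
presentation `f = p / q` does not depend on the presentation, provided `σ_i^J q ≠ 0`; and this
holds whenever `q ≠ 0` involves no variable of `J ∌ i`, because then `σ_i^J` is undone by
`u_{j₀} ↦ u_i - ∑_{j ∈ J ∖ j₀} u_j` for any `j₀ ∈ J`. Presenting `f`, `g`, `h` as fractions of
polynomials in their own variables, both sides of each identity become explicit fractions, and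
associativity reduces to the polynomial identities `σ_j^K σ_i^J = σ_i^J σ_j^K` (parallel case)
and `σ_{i'}^K σ_i^J = σ_i^{(J ∖ i') ∪ K}` on polynomials in the variables `I` (series case).
-/

lemma toM_injective : Function.Injective toM :=
  IsFractionRing.injective _ _

lemma toM_ne_zero {p : MvPolynomial ℕ ℚ} (hp : p ≠ 0) : toM p ≠ 0 :=
  (map_ne_zero_iff _ toM_injective).mpr hp

section psubst

variable {i j : ℕ} {s t p q : MvPolynomial ℕ ℚ} {J A : Finset ℕ}

@[simp]
lemma psubst_X_self : psubst i s (X i) = s := by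
  simp [psubst]

@[simp]
lemma psubst_X_of_ne (h : j ≠ i) : psubst i s (X j) = X j := by
  simp [psubst, h]

lemma psubst_eq_self (h : i ∉ p.vars) : psubst i s p = p := by
  conv_rhs => rw [← aeval_X_left_apply p]
  exact eval₂Hom_congr' rfl (fun m hm _ => if_neg (ne_of_mem_of_not_mem hm h)) rfl

lemma psubst_psubst (hij : i ≠ j) (hit : i ∉ t.vars) (p : MvPolynomial ℕ ℚ) :
    psubst j t (psubst i s p) = psubst i (psubst j t s) (psubst j t p) := by
  suffices (psubst j t).comp (psubst i s) = (psubst i (psubst j t s)).comp (psubst j t) from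
    DFunLike.congr_fun this p
  refine algHom_ext fun m => ?_
  rcases eq_or_ne m i with rfl | hmi
  · simp [hij]
  rcases eq_or_ne m j with rfl | hmj
  · simp [hmi, psubst_eq_self hit]
  · simp [hmi, hmj]

lemma disjoint_vars_mul (hp : Disjoint p.vars A) (hq : Disjoint q.vars A) :
    Disjoint (p * q).vars A := by
  classical
  exact Finset.disjoint_of_subset_left (vars_mul p q) (Finset.disjoint_union_left.mpr ⟨hp, hq⟩)

lemma disjoint_vars_psubst (hp : Disjoint p.vars A) (hs : Disjoint s.vars A) :
    Disjoint (psubst i s p).vars A := by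
  classical
  refine Finset.disjoint_of_subset_left (vars_bind₁ _ p) ?_
  refine (Finset.disjoint_biUnion_left _ _ _).mpr fun m hm => ?_
  split_ifs with hmi
  · exact hs
  · simpa using Finset.disjoint_left.mp hp hm

lemma vars_sumJ_subset (J : Finset ℕ) : (sumJ J).vars ⊆ J := by
  classical
  refine (vars_sum_subset _ _).trans (Finset.biUnion_subset.mpr fun m hm => ?_)
  simpa using hm

lemma psubst_sumJ_of_mem (h : i ∈ J) : psubst i s (sumJ J) = s + sumJ (J.erase i) := by
  rw [sumJ, sumJ, ← Finset.add_sum_erase _ _ h, map_add, map_sum, psubst_X_self]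
  congr 1
  exact Finset.sum_congr rfl fun m hm => psubst_X_of_ne (Finset.ne_of_mem_erase hm)

lemma psubst_comp_psubst_sumJ {j₀ : ℕ} (hj₀ : j₀ ∈ J) (hi : i ∉ J) :
    (psubst j₀ (X i - sumJ (J.erase j₀))).comp (psubst i (sumJ J))
      = psubst j₀ (X i - sumJ (J.erase j₀)) := by
  have hij₀ : i ≠ j₀ := ne_of_mem_of_not_mem hj₀ hi |>.symm
  refine algHom_ext fun m => ?_
  rcases eq_or_ne m i with rfl | hmi
  · rw [AlgHom.comp_apply, psubst_X_self, psubst_sumJ_of_mem hj₀, psubst_X_of_ne hij₀]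
    ring
  · rw [AlgHom.comp_apply, psubst_X_of_ne hmi]

lemma psubst_sumJ_ne_zero (hJ : J.Nonempty) (hi : i ∉ J) (hp : p ≠ 0)
    (hpJ : Disjoint p.vars J) : psubst i (sumJ J) p ≠ 0 := by
  obtain ⟨j₀, hj₀⟩ := hJ
  intro h
  have := congr(psubst j₀ (X i - sumJ (J.erase j₀)) $h)
  rw [← AlgHom.comp_apply, psubst_comp_psubst_sumJ hj₀ hi,
    psubst_eq_self (Finset.disjoint_right.mp hpJ hj₀), map_zero] at this
  exact hp this

end psubst

namespace MComp

variable {f g x : M} {i : ℕ} {J : Finset ℕ} {p q a b : MvPolynomial ℕ ℚ}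

lemma eq_of_eq_div (hc : MComp f i J g x) (hf : f = toM p / toM q)
    (hσq : psubst i (sumJ J) q ≠ 0) :
    x = toM (sumJ J) * g * (toM (psubst i (sumJ J) p) / toM (psubst i (sumJ J) q)) := by
  obtain ⟨p₁, q₁, hq₁, hσq₁, hf₁, rfl⟩ := hc
  have hq : q ≠ 0 := by rintro rfl; exact hσq (map_zero _)
  have hcross : p₁ * q = p * q₁ := toM_injective <| by
    rw [map_mul, map_mul, ← div_eq_div_iff (toM_ne_zero hq₁) (toM_ne_zero hq), ← hf₁, hf]
  congr 1
  rw [div_eq_div_iff (toM_ne_zero hσq₁) (toM_ne_zero hσq), ← map_mul, ← map_mul, ← map_mul,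
    ← map_mul, hcross]

lemma eq_div_of_eq_div (hc : MComp f i J g x) (hf : f = toM p / toM q)
    (hg : g = toM a / toM b) (hσq : psubst i (sumJ J) q ≠ 0) :
    x = toM (sumJ J * a * psubst i (sumJ J) p) / toM (b * psubst i (sumJ J) q) := by
  rw [hc.eq_of_eq_div hf hσq, hg]
  simp only [map_mul]
  ring

lemma eq_zero_of_empty (hc : MComp f i ∅ g x) : x = 0 := by
  obtain ⟨p, q, -, -, -, rfl⟩ := hc
  simp [sumJ]

lemma eq_zero_of_zero_left (hc : MComp 0 i J g x) : x = 0 := by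
  obtain ⟨p, q, hq, -, hf, rfl⟩ := hc
  obtain rfl : p = 0 := toM_injective <| by
    simpa [toM_ne_zero hq] using hf.symm
  simp

lemma eq_zero_of_zero_right (hc : MComp f i J 0 x) : x = 0 := by
  obtain ⟨p, q, -, -, -, rfl⟩ := hc
  simp

end MComp

section assoc

variable {I J K : Finset ℕ} {f g h : M}

theorem MComp.parallel_assoc {i j : ℕ} {x y x' y' : M}
    (hiI : i ∈ I) (hjI : j ∈ I) (hij : i ≠ j)
    (hIJ : Disjoint I J) (hIK : Disjoint I K) (hJK : Disjoint J K)
    (hf : MSupported f I) (hg : MSupported g J) (hh : MSupported h K)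
    (hx : MComp f i J g x) (hy : MComp x j K h y)
    (hx' : MComp f j K h x') (hy' : MComp x' i J g y') : y = y' := by
  rcases J.eq_empty_or_nonempty with rfl | hJ
  · obtain rfl := hx.eq_zero_of_empty
    rw [hy.eq_zero_of_zero_left, hy'.eq_zero_of_empty]
  rcases K.eq_empty_or_nonempty with rfl | hK
  · obtain rfl := hx'.eq_zero_of_empty
    rw [hy.eq_zero_of_empty, hy'.eq_zero_of_zero_left]
  obtain ⟨p, q, hq, hpI, hqI, rfl⟩ := hf
  obtain ⟨a, b, hb, haJ, hbJ, rfl⟩ := hg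
  obtain ⟨c, d, hd, hcK, hdK, rfl⟩ := hh
  have hiJ : i ∉ J := Finset.disjoint_left.mp hIJ hiI
  have hiK : i ∉ K := Finset.disjoint_left.mp hIK hiI
  have hjJ : j ∉ J := Finset.disjoint_left.mp hIJ hjI
  have hjK : j ∉ K := Finset.disjoint_left.mp hIK hjI
  have hxq := psubst_sumJ_ne_zero hJ hiJ hq (hIJ.mono_left hqI)
  have hx'q := psubst_sumJ_ne_zero hK hjK hq (hIK.mono_left hqI)
  have hyq := psubst_sumJ_ne_zero hK hjK (mul_ne_zero hb hxq) <|
    disjoint_vars_mul (hJK.mono_left hbJ)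
      (disjoint_vars_psubst (hIK.mono_left hqI) (hJK.mono_left (vars_sumJ_subset J)))
  have hy'q := psubst_sumJ_ne_zero hJ hiJ (mul_ne_zero hd hx'q) <|
    disjoint_vars_mul (hJK.symm.mono_left hdK)
      (disjoint_vars_psubst (hIJ.mono_left hqI) (hJK.symm.mono_left (vars_sumJ_subset K)))
  have hfixJ {r : MvPolynomial ℕ ℚ} (hr : r.vars ⊆ J) : psubst j (sumJ K) r = r :=
    psubst_eq_self fun hm => hjJ (hr hm)
  have hfixK {r : MvPolynomial ℕ ℚ} (hr : r.vars ⊆ K) : psubst i (sumJ J) r = r :=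
    psubst_eq_self fun hm => hiK (hr hm)
  have hcomm (r : MvPolynomial ℕ ℚ) :
      psubst j (sumJ K) (psubst i (sumJ J) r) = psubst i (sumJ J) (psubst j (sumJ K) r) := by
    rw [psubst_psubst hij fun hm => hiK (vars_sumJ_subset K hm), hfixJ (vars_sumJ_subset J)]
  rw [hy.eq_of_eq_div (hx.eq_div_of_eq_div rfl rfl hxq) hyq,
    hy'.eq_of_eq_div (hx'.eq_div_of_eq_div rfl rfl hx'q) hy'q]
  simp only [map_mul, hcomm, hfixJ (vars_sumJ_subset J), hfixJ haJ, hfixJ hbJ,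
    hfixK (vars_sumJ_subset K), hfixK hcK, hfixK hdK]
  ring

theorem MComp.series_assoc {i i' : ℕ} {x y z y' : M}
    (hiI : i ∈ I) (hi'J : i' ∈ J)
    (hIJ : Disjoint I J) (hIK : Disjoint I K) (hJK : Disjoint J K)
    (hf : MSupported f I) (hg : MSupported g J)
    (hx : MComp f i J g x) (hy : MComp x i' K h y)
    (hz : MComp g i' K h z) (hy' : MComp f i ((J.erase i') ∪ K) z y') : y = y' := by
  rcases K.eq_empty_or_nonempty with rfl | hK
  · obtain rfl := hz.eq_zero_of_empty
    rw [hy.eq_zero_of_empty, hy'.eq_zero_of_zero_right]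
  obtain ⟨p, q, hq, hpI, hqI, rfl⟩ := hf
  obtain ⟨a, b, hb, -, hbJ, rfl⟩ := hg
  have hiJ : i ∉ J := Finset.disjoint_left.mp hIJ hiI
  have hiK : i ∉ K := Finset.disjoint_left.mp hIK hiI
  have hi'K : i' ∉ K := Finset.disjoint_left.mp hJK hi'J
  have hi'I : i' ∉ I := Finset.disjoint_right.mp hIJ hi'J
  have hJ'ne : (J.erase i' ∪ K).Nonempty := hK.mono Finset.subset_union_right
  have hiJ' : i ∉ J.erase i' ∪ K := by simp [hiJ, hiK]
  have hxq := psubst_sumJ_ne_zero ⟨i', hi'J⟩ hiJ hq (hIJ.mono_left hqI)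
  have hyq := psubst_sumJ_ne_zero hK hi'K (mul_ne_zero hb hxq) <|
    disjoint_vars_mul (hJK.mono_left hbJ)
      (disjoint_vars_psubst (hIK.mono_left hqI) (hJK.mono_left (vars_sumJ_subset J)))
  have hzb := psubst_sumJ_ne_zero hK hi'K hb (hJK.mono_left hbJ)
  have hy'q := psubst_sumJ_ne_zero hJ'ne hiJ' hq <| Finset.disjoint_union_right.mpr
    ⟨(hIJ.mono_left hqI).mono_right (Finset.erase_subset _ _), hIK.mono_left hqI⟩
  have hsumJ : psubst i' (sumJ K) (sumJ J) = sumJ (J.erase i' ∪ K) := by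
    rw [psubst_sumJ_of_mem hi'J, sumJ, sumJ, sumJ,
      Finset.sum_union (hJK.mono_left (Finset.erase_subset _ _)), add_comm]
  have hcomp {r : MvPolynomial ℕ ℚ} (hr : r.vars ⊆ I) :
      psubst i' (sumJ K) (psubst i (sumJ J) r) = psubst i (sumJ (J.erase i' ∪ K)) r := by
    rw [psubst_psubst (ne_of_mem_of_not_mem hi'J hiJ).symm
      (fun hm => hiK (vars_sumJ_subset K hm)), hsumJ, psubst_eq_self fun hm => hi'I (hr hm)]
  rw [hy.eq_of_eq_div (hx.eq_div_of_eq_div rfl rfl hxq) hyq, hy'.eq_of_eq_div rfl hy'q,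
    hz.eq_of_eq_div rfl hzb]
  simp only [map_mul, hsumJ, hcomp hpI, hcomp hqI]
  ring

end assoc

/-- the mould composition is associative in both senses: parallel
associativity `(f ∘_i g) ∘_j h = (f ∘_j h) ∘_i g` for distinct `i, j` in the index
set of `f`, and series associativity `(f ∘_i g) ∘_{i'} h = f ∘_i (g ∘_{i'} h)` for
`i'` in the index set of `g`. -/
theorem stmt14 :
    (∀ (I J K : Finset ℕ) (f g h : M) (i j : ℕ),
      i ∈ I → j ∈ I → i ≠ j →
      Disjoint I J → Disjoint I K → Disjoint J K →
      MSupported f I → MSupported g J → MSupported h K →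
      ∀ x y x' y' : M,
        MComp f i J g x → MComp x j K h y →
        MComp f j K h x' → MComp x' i J g y' → y = y') ∧
    (∀ (I J K : Finset ℕ) (f g h : M) (i i' : ℕ),
      i ∈ I → i' ∈ J →
      Disjoint I J → Disjoint I K → Disjoint J K →
      MSupported f I → MSupported g J → MSupported h K →
      ∀ x y z y' : M,
        MComp f i J g x → MComp x i' K h y →
        MComp g i' K h z → MComp f i ((J.erase i') ∪ K) z y' → y = y') :=
  ⟨fun _ _ _ _ _ _ _ _ hiI hjI hij hIJ hIK hJK hf hg hh _ _ _ _ =>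
      MComp.parallel_assoc hiI hjI hij hIJ hIK hJK hf hg hh,
    fun _ _ _ _ _ _ _ _ hiI hi'J hIJ hIK hJK hf hg _ _ _ _ _ =>
      MComp.series_assoc hiI hi'J hIJ hIK hJK hf hg⟩
end
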